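/- arXiv:2310.10183 — 4 statements merged into one kernel-verified Lean document; each statement's English description precedes it below -/
import Mathlib

section
/- Let x, y be real numbers with x ≥ y > 0, let t be a positive integer, and let a₀, a₁, …, a_t be real numbers each at least 2 with a₀ ≤ max_{1≤i≤t} a_i. Then (x + a₀ - 2 + t) / (y + (∑_{i=1}^t a_i) - t) ≤ x / y. -/
/-! Pick `j` with `a₀ ≤ a_j`; the remaining `t - 1` terms are each at least `2`, so with
`c = a₀ - 2 + t ≥ 0` the denominator is at least `y + c` while the numerator is `x + c`.
Adding the same `c ≥ 0` to numerator and denominator of a fraction `x / y ≥ 1` can only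
decrease it. -/

open Finset

theorem Finset.add_card_erase_nsmul_le_sum {ι M : Type*} [AddCommMonoid M] [PartialOrder M]
    [IsOrderedAddMonoid M] [DecidableEq ι] {s : Finset ι} {f : ι → M} {j : ι} {b : M}
    (hj : j ∈ s) (hb : ∀ i ∈ s, b ≤ f i) :
    f j + #(s.erase j) • b ≤ ∑ i ∈ s, f i := by
  rw [← add_sum_erase s f hj]
  gcongr
  exact card_nsmul_le_sum _ _ _ fun i hi => hb i (mem_of_mem_erase hi)

theorem add_div_add_le_div {α : Type*} [Field α] [LinearOrder α] [IsStrictOrderedRing α]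
    {x y c : α} (hy : 0 < y) (hxy : y ≤ x) (hc : 0 ≤ c) :
    (x + c) / (y + c) ≤ x / y := by
  rw [div_le_div_iff₀ (by linarith) hy]
  nlinarith

theorem stmt0 (x y : ℝ) (t : ℕ) (ht : 1 ≤ t) (a : ℕ → ℝ)
    (hxy : y ≤ x) (hy : 0 < y)
    (h2 : ∀ i ≤ t, 2 ≤ a i)
    (hmax : a 0 ≤ (Finset.Icc 1 t).sup' (Finset.nonempty_Icc.mpr ht) a) :
    (x + a 0 - 2 + t) / (y + (∑ i ∈ Finset.Icc 1 t, a i) - t) ≤ x / y := by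
  obtain ⟨j, hj, ha0j⟩ := (le_sup'_iff _).mp hmax
  have ht' : (1 : ℝ) ≤ t := by exact_mod_cast ht
  have ha0 : 2 ≤ a 0 := h2 0 t.zero_le
  have hsum : a 0 + 2 * (t - 1) ≤ ∑ i ∈ Icc 1 t, a i := by
    have := add_card_erase_nsmul_le_sum (b := (2 : ℝ)) hj fun i hi => h2 i (mem_Icc.mp hi).2
    rw [card_erase_of_mem hj, Nat.card_Icc, Nat.add_sub_cancel, nsmul_eq_mul,
      Nat.cast_sub ht] at this
    push_cast at this
    linarith
  set c := a 0 - 2 + t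
  calc (x + a 0 - 2 + t) / (y + (∑ i ∈ Icc 1 t, a i) - t)
      = (x + c) / (y + (∑ i ∈ Icc 1 t, a i) - t) := by ring
    _ ≤ (x + c) / (y + c) :=
        div_le_div_of_nonneg_left (by linarith) (by linarith) (by linarith)
    _ ≤ x / y := add_div_add_le_div hy hxy (by linarith)
end

section
/- For disjoint vertex subsets A, B of a finite simple graph G, the quantity δ(A,B) = 2|A| − 2|B| + ∑_{v∈B} d_{G−A}(v) − o(A,B) is even, where o(A,B) counts the components H of G − (A ∪ B) for which the number of edges between H and B is odd. -/
open SimpleGraph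

variable {V : Type*}

/-- The number of (ordered) pairs giving edges between `X` and `Y`;
for disjoint `X`, `Y` this is the number of edges between `X` and `Y`. -/
noncomputable def eB (G : SimpleGraph V) (X Y : Set V) : ℕ :=
  Set.ncard {p : V × V | p.1 ∈ X ∧ p.2 ∈ Y ∧ G.Adj p.1 p.2}

/-- The vertex set (in `V`) of a connected component of the induced subgraph on `U`. -/
def compSupp (G : SimpleGraph V) (U : Set V)
    (C : (G.induce U).ConnectedComponent) : Set V :=
  Subtype.val '' C.supp

/-- `δ(A,B) = 2|A| - 2|B| + ∑_{v ∈ B} d_{G-A}(v) - o(A,B)`, where `o(A,B)` is the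
number of components of `G - (A ∪ B)` sending an odd number of edges to `B`. -/
noncomputable def deltaAB (G : SimpleGraph V) (A B : Set V) : ℤ :=
  2 * A.ncard - 2 * B.ncard + eB G B Aᶜ -
    Nat.card {C : (G.induce (A ∪ B)ᶜ).ConnectedComponent //
      Odd (eB G (compSupp G (A ∪ B)ᶜ C) B)}

/-- A barrier (Tutte pair) of `G`. -/
def IsBarrier (G : SimpleGraph V) (A B : Set V) : Prop :=
  Disjoint A B ∧ deltaAB G A B ≤ -2

/-- A biased barrier: a barrier maximizing `|A|` and, subject to that, minimizing `|B|`. -/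
def IsBiasedBarrier (G : SimpleGraph V) (A B : Set V) : Prop :=
  IsBarrier G A B ∧
    ∀ A' B' : Set V, IsBarrier G A' B' →
      A'.ncard ≤ A.ncard ∧ (A'.ncard = A.ncard → B.ncard ≤ B'.ncard)

/-- A `2`-factor is a `2`-regular spanning subgraph. -/
def HasTwoFactor (G : SimpleGraph V) : Prop :=
  ∃ H : SimpleGraph V, H ≤ G ∧ ∀ v : V, (H.neighborSet v).ncard = 2

/-- The number of components of `G - S`. -/
noncomputable def numComp (G : SimpleGraph V) (S : Set V) : ℕ :=
  Nat.card ((G.induce Sᶜ).ConnectedComponent)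

/-- `G` is `t`-tough: every vertex cut `S` satisfies `|S| ≥ t · c(G - S)`. -/
def Tough (t : ℝ) (G : SimpleGraph V) : Prop :=
  ∀ S : Set V, 2 ≤ numComp G S → t * (numComp G S : ℝ) ≤ (S.ncard : ℝ)

/-- The toughness `τ(G) = min_S |S| / c(G - S)` over vertex cuts `S`. -/
noncomputable def toughness (G : SimpleGraph V) : ℝ :=
  sInf {r : ℝ | ∃ S : Set V, 2 ≤ numComp G S ∧ r = (S.ncard : ℝ) / (numComp G S : ℝ)}

/-- `G` is `k`-connected. -/
def KConnected (k : ℕ) (G : SimpleGraph V) : Prop :=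
  k < Nat.card V ∧ ∀ S : Set V, S.ncard < k → (G.induce Sᶜ).Connected

/-- The independence number `α(G)`. -/
noncomputable def indepNum (G : SimpleGraph V) : ℕ :=
  sSup {n : ℕ | ∃ s : Set V, (∀ u ∈ s, ∀ v ∈ s, ¬ G.Adj u v) ∧ s.ncard = n}

/-- The minimum degree `δ(G)`. -/
noncomputable def minDeg (G : SimpleGraph V) : ℕ :=
  sInf {d : ℕ | ∃ v : V, (G.neighborSet v).ncard = d}

/-- `H` occurs as an induced subgraph of `G`. -/
def IsInducedCopy {W : Type*} (H : SimpleGraph W) (G : SimpleGraph V) : Prop :=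
  ∃ f : W ↪ V, ∀ a b : W, G.Adj (f a) (f b) ↔ H.Adj a b

/-- The disjoint union `P_m ∪ k·P_1` of a path on `m` vertices and `k` isolated vertices. -/
def pathUnion (m k : ℕ) : SimpleGraph (Fin m ⊕ Fin k) where
  Adj a b := ∃ i j : Fin m, a = Sum.inl i ∧ b = Sum.inl j ∧ (pathGraph m).Adj i j
  symm := by constructor; rintro a b ⟨i, j, rfl, rfl, h⟩; exact ⟨j, i, rfl, rfl, h.symm⟩
  loopless := by
    constructor
    rintro a ⟨i, j, rfl, hj, h⟩
    obtain rfl := Sum.inl.inj hj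
    exact (pathGraph m).loopless.irrefl i h

/-- The join `G ∨ H` of two graphs. -/
def joinG {α β : Type*} (G : SimpleGraph α) (H : SimpleGraph β) :
    SimpleGraph (α ⊕ β) where
  Adj x y :=
    match x, y with
    | Sum.inl a, Sum.inl b => G.Adj a b
    | Sum.inr a, Sum.inr b => H.Adj a b
    | _, _ => True
  symm := by constructor; rintro (a | a) (b | b) h <;> simp_all <;> exact h.symm
  loopless := by constructor; rintro (a | a) h <;> simp_all

/-- `a` disjoint copies of the complete graph `K_b`. -/
def cliquesG (a b : ℕ) : SimpleGraph (Fin a × Fin b) where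
  Adj p q := p.1 = q.1 ∧ p.2 ≠ q.2
  symm := by constructor; rintro p q ⟨h1, h2⟩; exact ⟨h1.symm, h2.symm⟩
  loopless := by constructor; rintro p ⟨_, h⟩; exact h rfl

/-- The graph `H_n`: `K_n ∨ (K̄_{2n+1} ∪ K_{2n+1})` together with a perfect matching
between the independent part and the clique part. -/
def Hgraph (n : ℕ) :
    SimpleGraph (Fin n ⊕ (Fin (2 * n + 1) ⊕ Fin (2 * n + 1))) where
  Adj x y := x ≠ y ∧
    match x, y with
    | Sum.inl _, _ => True
    | _, Sum.inl _ => True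
    | Sum.inr (Sum.inl _), Sum.inr (Sum.inl _) => False
    | Sum.inr (Sum.inr _), Sum.inr (Sum.inr _) => True
    | Sum.inr (Sum.inl i), Sum.inr (Sum.inr j) => i = j
    | Sum.inr (Sum.inr i), Sum.inr (Sum.inl j) => i = j
  symm := by
    constructor
    rintro (a | a | a) (b | b | b) ⟨hne, h⟩ <;>
      exact ⟨Ne.symm hne, by simp_all⟩
  loopless := by constructor; rintro x ⟨hne, _⟩; exact hne rfl

/-!
Modulo 2, `δ(A,B) ≡ e(B, V ∖ A) - o(A,B)`. Since `V ∖ A` is the disjoint union of `B` and the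
components `H` of `G - (A ∪ B)`, we get `e(B, V ∖ A) = e(B,B) + ∑_H e(H,B)`. Counted over
ordered pairs, `e(B,B)` is twice the number of edges inside `B`, and a sum of naturals has the
parity of its number of odd terms, so `e(B, V ∖ A) ≡ o(A,B)`.
-/

open scoped Function

lemma Nat.even_finsum_iff_even_card_odd {ι : Type*} [Finite ι] (f : ι → ℕ) :
    Even (∑ᶠ i, f i) ↔ Even (Nat.card {i // Odd (f i)}) := by
  classical
  have := Fintype.ofFinite ι
  rw [finsum_eq_sum_of_fintype, Finset.even_sum_iff_even_card_odd, Nat.card_eq_fintype_card,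
    Fintype.card_subtype]

section EdgeCount

variable {G : SimpleGraph V}

lemma eB_comm (X Y : Set V) : eB G X Y = eB G Y X := by
  rw [eB, eB, ← Set.ncard_image_of_injective _ Prod.swap_injective]
  congr 1
  ext ⟨a, b⟩
  simp [G.adj_comm, and_left_comm]

variable [Finite V]

lemma eB_union_left {X Z : Set V} (h : Disjoint X Z) (Y : Set V) :
    eB G (X ∪ Z) Y = eB G X Y + eB G Z Y := by
  unfold eB
  rw [← Set.ncard_union_eq]
  · congr 1
    ext p
    simp [or_and_right]
  · exact Set.disjoint_left.mpr fun p hX hZ ↦ Set.disjoint_left.mp h hX.1 hZ.1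

lemma eB_iUnion_left {ι : Type*} [Finite ι] {f : ι → Set V} (hf : Pairwise (Disjoint on f))
    (Y : Set V) : eB G (⋃ i, f i) Y = ∑ᶠ i, eB G (f i) Y := by
  unfold eB
  rw [← Set.ncard_iUnion_of_finite (fun _ ↦ Set.toFinite _)]
  · congr 1
    ext p
    simp
  · intro i j hij
    exact Set.disjoint_left.mpr fun p hi hj ↦ Set.disjoint_left.mp (hf hij) hi.1 hj.1

lemma even_eB_self (X : Set V) : Even (eB G X X) := by
  classical
  have : Fintype V := Fintype.ofFinite V
  have hS : {p : V × V | p.1 ∈ X ∧ p.2 ∈ X ∧ G.Adj p.1 p.2} =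
      Prod.map Subtype.val Subtype.val ''
        ↑(Finset.univ.filter fun p : X × X ↦ (G.induce X).Adj p.1 p.2 : Set (X × X)) := by
    ext ⟨a, b⟩
    constructor
    · rintro ⟨ha, hb, h⟩
      exact ⟨(⟨a, ha⟩, ⟨b, hb⟩), by simpa using h, rfl⟩
    · rintro ⟨⟨⟨a, ha⟩, ⟨b, hb⟩⟩, h, he⟩
      obtain ⟨rfl, rfl⟩ := Prod.ext_iff.mp he
      exact ⟨ha, hb, by simpa using h⟩
  rw [eB, hS,
    Set.ncard_image_of_injective _ (Subtype.val_injective.prodMap Subtype.val_injective),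
    Set.ncard_coe_finset, ← two_mul_card_edgeFinset]
  exact even_two_mul _

end EdgeCount

lemma pairwise_disjoint_compSupp (G : SimpleGraph V) (U : Set V) :
    Pairwise (Disjoint on compSupp G U) := fun _ _ h ↦
  (Set.disjoint_image_iff Subtype.val_injective).mpr
    (pairwise_disjoint_supp_connectedComponent _ h)

lemma iUnion_compSupp (G : SimpleGraph V) (U : Set V) : ⋃ C, compSupp G U C = U := by
  simp_rw [compSupp, ← Set.image_iUnion, iUnion_connectedComponentSupp, Set.image_univ,
    Subtype.range_coe]

lemma even_eB_iff_even_card_odd_compSupp [Finite V] (G : SimpleGraph V) (U B : Set V) :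
    Even (eB G U B) ↔ Even (Nat.card {C // Odd (eB G (compSupp G U C) B)}) := by
  conv_lhs => rw [← iUnion_compSupp G U]
  rw [eB_iUnion_left (pairwise_disjoint_compSupp G U), Nat.even_finsum_iff_even_card_odd]

lemma even_eB_compl_iff [Finite V] (G : SimpleGraph V) {A B : Set V} (hAB : Disjoint A B) :
    Even (eB G B Aᶜ) ↔ Even (Nat.card {C : (G.induce (A ∪ B)ᶜ).ConnectedComponent //
      Odd (eB G (compSupp G (A ∪ B)ᶜ C) B)}) := by
  have hAc : Aᶜ = B ∪ (A ∪ B)ᶜ := by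
    rw [Set.compl_union, Set.union_inter_distrib_left, Set.union_compl_self, Set.inter_univ,
      Set.union_eq_right.mpr hAB.symm.subset_compl_right]
  rw [eB_comm, hAc,
    eB_union_left (Set.disjoint_compl_right_iff_subset.mpr Set.subset_union_right),
    Nat.even_add, iff_true_left (even_eB_self B), even_eB_iff_even_card_odd_compSupp]

theorem stmt3 {V : Type*} [Fintype V] (G : SimpleGraph V) (A B : Set V)
    (hAB : Disjoint A B) :
    Even (deltaAB G A B) := by
  rw [deltaAB, Int.even_sub, Int.even_add, Int.even_coe_nat, Int.even_coe_nat,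
    even_eB_compl_iff G hAB]
  simp [Int.even_sub]
end

section
/- Let G be a graph with no 2-factor and (A,B) a biased barrier of G. If H is a component of G − (A ∪ B) with e(H,B) odd, then every vertex v ∈ B has at most one neighbor in H, and every vertex of H has at most one neighbor in B. -/
open SimpleGraph

variable {V : Type*}

/-! Moving a vertex `u ∉ A ∪ B` with `k` neighbours in `B` into `A` changes `δ` by at most
`3 - k`: `|A|` grows by one, `∑_{v ∈ B} d_{G-A}(v)` drops by `k`, and only the component
containing `u` can stop being odd. Removing `b` from `B` changes `δ` by at most
`2 + c - d`, where `d = d_{G-A}(b)` and `c` is the number of components of `G - (A ∪ B)`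
adjacent to `b`, since only those components can be absorbed. If `b` has two neighbours in one
component then `c + 1 ≤ d`. Since `δ` is always even, a change by at most `1` keeps a barrier
a barrier, contradicting the maximality of `|A|`, resp. the minimality of `|B|`. -/

open scoped Finset

theorem Finset.card_filter_ne_zero_add_one_le_sum {ι : Type*} {s : Finset ι}
    (f : ι → ℕ) {c : ι} (hc : c ∈ s) (h2 : 2 ≤ f c) :
    #{x ∈ s | f x ≠ 0} + 1 ≤ ∑ x ∈ s, f x := by
  classical
  have hone : ∑ x ∈ s, (if x = c then 1 else 0) = 1 := by simp [hc]
  rw [Finset.card_filter, ← hone, ← Finset.sum_add_distrib]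
  refine Finset.sum_le_sum fun x _ => ?_
  rcases eq_or_ne x c with rfl | hxc <;> split_ifs <;> omega

namespace SimpleGraph

variable {G : SimpleGraph V}

section compSupp

variable {U U' : Set V}

theorem mem_compSupp {C : (G.induce U).ConnectedComponent} {x : V} :
    x ∈ compSupp G U C ↔ ∃ h : x ∈ U, (G.induce U).connectedComponentMk ⟨x, h⟩ = C := by
  simp [compSupp]

theorem compSupp_subset (C : (G.induce U).ConnectedComponent) : compSupp G U C ⊆ U := by
  rintro _ ⟨x, -, rfl⟩
  exact x.2

theorem compSupp_injective : Function.Injective (compSupp G U) :=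
  fun _ _ h => ConnectedComponent.supp_injective (Set.image_injective.2 Subtype.val_injective h)

theorem eq_of_mem_compSupp {C D : (G.induce U).ConnectedComponent} {x : V}
    (hC : x ∈ compSupp G U C) (hD : x ∈ compSupp G U D) : C = D := by
  obtain ⟨_, rfl⟩ := mem_compSupp.1 hC
  obtain ⟨_, rfl⟩ := mem_compSupp.1 hD
  rfl

theorem mem_compSupp_of_adj {C : (G.induce U).ConnectedComponent} {x y : V}
    (hx : x ∈ compSupp G U C) (hy : y ∈ U) (hxy : G.Adj x y) : y ∈ compSupp G U C := by
  obtain ⟨hxU, rfl⟩ := mem_compSupp.1 hx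
  exact mem_compSupp.2 ⟨hy, (ConnectedComponent.connectedComponentMk_eq_of_adj
    (show (G.induce U).Adj ⟨x, hxU⟩ ⟨y, hy⟩ from hxy)).symm⟩

theorem compSupp_subset_compSupp_of_closed {C : (G.induce U).ConnectedComponent}
    {C' : (G.induce U').ConnectedComponent} {v : V}
    (hvC : v ∈ compSupp G U C) (hvC' : v ∈ compSupp G U' C')
    (hclosed : ∀ x ∈ compSupp G U C, ∀ y ∈ U', G.Adj x y → y ∈ U) :
    compSupp G U' C' ⊆ compSupp G U C := by
  intro x hx
  obtain ⟨hv, hvmk⟩ := mem_compSupp.1 hvC'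
  obtain ⟨hx, hxmk⟩ := mem_compSupp.1 hx
  have hreach : (G.induce U').Reachable ⟨v, hv⟩ ⟨x, hx⟩ :=
    ConnectedComponent.exact (hvmk.trans hxmk.symm)
  rw [reachable_iff_reflTransGen] at hreach
  suffices ∀ z : U', Relation.ReflTransGen (G.induce U').Adj ⟨v, hv⟩ z →
      (z : V) ∈ compSupp G U C from this _ hreach
  intro z hz
  induction hz with
  | refl => exact hvC
  | tail _ hyz ih => exact mem_compSupp_of_adj ih (hclosed _ ih _ (Subtype.prop _) hyz) hyz

theorem exists_compSupp_eq_of_closed (C : (G.induce U).ConnectedComponent)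
    (hsub : compSupp G U C ⊆ U')
    (hclosed : ∀ x ∈ compSupp G U C, ∀ y ∈ U', G.Adj x y → y ∈ U) :
    ∃ C' : (G.induce U').ConnectedComponent, compSupp G U' C' = compSupp G U C := by
  obtain ⟨⟨v, hvU⟩, hvC⟩ := C.exists_rep
  have hv : v ∈ compSupp G U C := mem_compSupp.2 ⟨hvU, hvC⟩
  let C' := (G.induce U').connectedComponentMk ⟨v, hsub hv⟩
  have hv' : v ∈ compSupp G U' C' := mem_compSupp.2 ⟨hsub hv, rfl⟩
  have hle := compSupp_subset_compSupp_of_closed hv hv' hclosed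
  refine ⟨C', hle.antisymm (compSupp_subset_compSupp_of_closed hv' hv ?_)⟩
  exact fun x hx y hy hxy => hsub (mem_compSupp_of_adj (hle hx) hy hxy)

end compSupp

theorem eB_comm (X Y : Set V) : eB G X Y = eB G Y X := by
  have : {p : V × V | p.1 ∈ Y ∧ p.2 ∈ X ∧ G.Adj p.1 p.2} =
      Prod.swap '' {p : V × V | p.1 ∈ X ∧ p.2 ∈ Y ∧ G.Adj p.1 p.2} := by
    ext ⟨a, b⟩
    simp [and_left_comm, G.adj_comm, and_comm]
  rw [eB, eB, this, Set.ncard_image_of_injective _ Prod.swap_injective]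

theorem eB_mono_right [Finite V] (X : Set V) {Y Y' : Set V} (h : Y ⊆ Y') :
    eB G X Y ≤ eB G X Y' :=
  Set.ncard_le_ncard (fun _ ⟨hx, hy, hxy⟩ => ⟨hx, h hy, hxy⟩)

theorem eB_union_right [Finite V] (X : Set V) {Y₁ Y₂ : Set V} (h : Disjoint Y₁ Y₂) :
    eB G X (Y₁ ∪ Y₂) = eB G X Y₁ + eB G X Y₂ := by
  rw [eB, eB, eB, ← Set.ncard_union_eq]
  · congr 1
    ext p
    simp only [Set.mem_ofPred_eq, Set.mem_union]
    tauto
  · exact Set.disjoint_left.2 fun p h₁ h₂ => h.le_bot ⟨h₁.2.1, h₂.2.1⟩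

theorem eB_union_left [Finite V] {X₁ X₂ : Set V} (Y : Set V) (h : Disjoint X₁ X₂) :
    eB G (X₁ ∪ X₂) Y = eB G X₁ Y + eB G X₂ Y := by
  rw [eB_comm, eB_union_right _ h, eB_comm, eB_comm Y]

theorem eB_singleton_right (X : Set V) (v : V) :
    eB G X {v} = (G.neighborSet v ∩ X).ncard := by
  have : {p : V × V | p.1 ∈ X ∧ p.2 ∈ ({v} : Set V) ∧ G.Adj p.1 p.2} =
      (·, v) '' (G.neighborSet v ∩ X) := by
    ext ⟨a, b⟩
    simp only [Set.mem_ofPred_eq, Set.mem_singleton_iff, Set.mem_image, Set.mem_inter_iff,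
      mem_neighborSet, Prod.mk.injEq]
    constructor
    · rintro ⟨ha, rfl, hab⟩
      exact ⟨a, ⟨hab.symm, ha⟩, rfl, rfl⟩
    · rintro ⟨x, ⟨hvx, hx⟩, rfl, rfl⟩
      exact ⟨hx, rfl, hvx.symm⟩
  rw [eB, this, Set.ncard_image_of_injective _ fun _ _ h => (Prod.mk.inj h).1]

theorem eB_singleton_left (Y : Set V) (v : V) : eB G {v} Y = (G.neighborSet v ∩ Y).ncard := by
  rw [eB_comm, eB_singleton_right]

open Classical in
theorem eB_eq_card_filter [Fintype V] (X Y : Set V) :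
    eB G X Y = #{p : V × V | p.1 ∈ X ∧ p.2 ∈ Y ∧ G.Adj p.1 p.2} := by
  rw [eB, ← Set.ncard_coe_finset]
  simp

theorem even_eB_self [Finite V] (X : Set V) : Even (eB G X X) := by
  classical
  cases nonempty_fintype V
  let e : {p : V × V | p.1 ∈ X ∧ p.2 ∈ X ∧ G.Adj p.1 p.2} ≃ (G.induce X).Dart :=
    { toFun := fun p => ⟨(⟨p.1.1, p.2.1⟩, ⟨p.1.2, p.2.2.1⟩), p.2.2.2⟩
      invFun := fun d => ⟨(d.fst, d.snd), d.fst.2, d.snd.2, d.adj⟩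
      left_inv := fun _ => rfl
      right_inv := fun _ => rfl }
  rw [eB, ← Nat.card_coe_set_eq, Nat.card_congr e, Nat.card_eq_fintype_card,
    dart_card_eq_twice_card_edges]
  exact even_two_mul _

theorem eB_eq_sum_compSupp [Fintype V] (X U : Set V)
    [Fintype (G.induce U).ConnectedComponent] :
    eB G X U = ∑ C : (G.induce U).ConnectedComponent, eB G X (compSupp G U C) := by
  classical
  let comp : V × V → Option (G.induce U).ConnectedComponent := fun p =>
    if h : p.2 ∈ U then some ((G.induce U).connectedComponentMk ⟨p.2, h⟩) else none
  rw [eB_eq_card_filter, Finset.card_eq_sum_card_fiberwise (f := comp)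
    (t := Finset.univ.map Function.Embedding.some) (fun p hp => ?_), Finset.sum_map]
  · refine Finset.sum_congr rfl fun C _ => ?_
    rw [eB_eq_card_filter, Finset.filter_filter]
    congr 1
    ext ⟨a, b⟩
    simp only [Finset.mem_filter, Finset.mem_univ, true_and, comp, mem_compSupp]
    constructor
    · rintro ⟨⟨ha, hb, hab⟩, hC⟩
      simp only [dif_pos hb, Function.Embedding.some_apply, Option.some.injEq] at hC
      exact ⟨ha, ⟨hb, hC⟩, hab⟩
    · rintro ⟨ha, ⟨hb, hC⟩, hab⟩
      simp [hC, ha, hb, hab]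
  · have hU : p.2 ∈ U := by simp_all
    simp [comp, hU]

variable {A B A' B' : Set V}

variable (G) in
/-- The number `o(A, B)` in `deltaAB`, for an arbitrary vertex set `U` in place of
`(A ∪ B)ᶜ`. -/
noncomputable def oddCompCount (U B : Set V) : ℕ :=
  Nat.card {C : (G.induce U).ConnectedComponent // Odd (eB G (compSupp G U C) B)}

theorem deltaAB_eq (A B : Set V) :
    deltaAB G A B = 2 * A.ncard - 2 * B.ncard + eB G B Aᶜ - oddCompCount G (A ∪ B)ᶜ B :=
  rfl

theorem even_eB_add_oddCompCount [Finite V] (B U : Set V) :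
    Even (eB G B U + oddCompCount G U B) := by
  classical
  cases nonempty_fintype V
  rw [eB_eq_sum_compSupp, oddCompCount, Nat.card_eq_fintype_card, Fintype.card_subtype,
    Nat.even_add, Finset.even_sum_iff_even_card_odd]
  simp_rw [eB_comm B]

theorem even_deltaAB [Finite V] (h : Disjoint A B) : Even (deltaAB G A B) := by
  have hAc : Aᶜ = B ∪ (A ∪ B)ᶜ := by
    ext x
    have : x ∈ A → x ∉ B := fun hx => Set.disjoint_left.1 h hx
    simp only [Set.mem_compl_iff, Set.mem_union]
    tauto
  obtain ⟨k, hk⟩ := (even_eB_self (G := G) B).add (even_eB_add_oddCompCount (G := G) B (A ∪ B)ᶜ)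
  refine ⟨A.ncard - B.ncard + k - oddCompCount G (A ∪ B)ᶜ B, ?_⟩
  rw [deltaAB_eq, hAc, eB_union_right _ (Set.disjoint_compl_right_iff_subset.2
    Set.subset_union_right)]
  omega

-- `δ` is even, so raising it by at most one keeps it at most `-2`.
theorem IsBarrier.of_deltaAB_le [Finite V] (hAB : IsBarrier G A B) (h : Disjoint A' B')
    (hδ : deltaAB G A' B' ≤ deltaAB G A B + 1) : IsBarrier G A' B' := by
  obtain ⟨k, hk⟩ := even_deltaAB (G := G) h
  exact ⟨h, by have := hAB.2; omega⟩

theorem oddCompCount_le_add [Finite V] {U U' : Set V}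
    (P : (G.induce U).ConnectedComponent → Prop)
    (hsub : ∀ D, ¬ P D → compSupp G U D ⊆ U')
    (hclosed : ∀ D, ¬ P D → ∀ x ∈ compSupp G U D, ∀ y ∈ U', G.Adj x y → y ∈ U)
    (hB : ∀ D, ¬ P D → eB G (compSupp G U D) B' = eB G (compSupp G U D) B) :
    oddCompCount G U B ≤ oddCompCount G U' B' + Nat.card {D // P D} := by
  have hsurvive : ∀ D : {D // Odd (eB G (compSupp G U D) B) ∧ ¬ P D},
      ∃ D' : (G.induce U').ConnectedComponent, compSupp G U' D' = compSupp G U D :=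
    fun D => exists_compSupp_eq_of_closed D.1 (hsub _ D.2.2) (hclosed _ D.2.2)
  choose f hf using hsurvive
  have hinj : Nat.card {D // Odd (eB G (compSupp G U D) B) ∧ ¬ P D} ≤ oddCompCount G U' B' := by
    refine Nat.card_le_card_of_injective
      (fun D => ⟨f D, by rw [hf, hB _ D.2.2]; exact D.2.1⟩) fun D₁ D₂ h => ?_
    have : f D₁ = f D₂ := congrArg Subtype.val h
    exact Subtype.ext (compSupp_injective (by rw [← hf, ← hf, this]))
  calc oddCompCount G U B
      ≤ Nat.card {D // Odd (eB G (compSupp G U D) B) ∧ ¬ P D} + Nat.card {D // P D} := by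
        have hcard (p : (G.induce U).ConnectedComponent → Prop) :
            Nat.card {D // p D} = {D | p D}.ncard := Nat.card_coe_set_eq _
        rw [oddCompCount, hcard, hcard, hcard]
        refine (Set.ncard_le_ncard fun D hD => ?_).trans (Set.ncard_union_le _ _)
        by_cases hP : P D
        exacts [Or.inr hP, Or.inl ⟨hD, hP⟩]
    _ ≤ oddCompCount G U' B' + Nat.card {D // P D} := Nat.add_le_add_right hinj _

theorem deltaAB_insert_add_le [Finite V] {u : V} (hu : u ∈ (A ∪ B)ᶜ) :
    deltaAB G (insert u A) B + (G.neighborSet u ∩ B).ncard ≤ deltaAB G A B + 3 := by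
  have huA : u ∉ A := fun h => hu (Or.inl h)
  have hU : (insert u A ∪ B)ᶜ = (A ∪ B)ᶜ \ {u} := by
    ext x
    simp only [Set.mem_compl_iff, Set.mem_union, Set.mem_insert_iff, Set.mem_sdiff,
      Set.mem_singleton_iff]
    tauto
  have hodd : oddCompCount G (A ∪ B)ᶜ B ≤ oddCompCount G (insert u A ∪ B)ᶜ B + 1 := by
    refine (oddCompCount_le_add (fun D => u ∈ compSupp G (A ∪ B)ᶜ D) ?_ ?_ fun _ _ => rfl).trans
      (Nat.add_le_add_left (Finite.card_le_one_iff_subsingleton.2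
        ⟨fun D₁ D₂ => Subtype.ext (eq_of_mem_compSupp D₁.2 D₂.2)⟩) _)
    · intro D huD x hx
      rw [hU]
      exact ⟨compSupp_subset D hx, fun hxu => huD (hxu ▸ hx)⟩
    · intro D _ x _ y hy _
      rw [hU] at hy
      exact hy.1
  have hE : eB G B Aᶜ = eB G B (insert u A)ᶜ + (G.neighborSet u ∩ B).ncard := by
    have hAc : Aᶜ = (insert u A)ᶜ ∪ {u} := by
      ext x
      rcases eq_or_ne x u with rfl | hx <;> simp [*]
    rw [← eB_singleton_right, ← eB_union_right _ (by simp), ← hAc]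
  have hcard : (insert u A).ncard = A.ncard + 1 := Set.ncard_insert_of_notMem huA
  rw [deltaAB_eq, deltaAB_eq, hcard, hE]
  push_cast
  omega

theorem deltaAB_diff_singleton_add_le [Finite V] {b : V} (hbB : b ∈ B) (hbA : b ∉ A) :
    deltaAB G A (B \ {b}) + eB G {b} Aᶜ ≤ deltaAB G A B + 2 +
      Nat.card {D : (G.induce (A ∪ B)ᶜ).ConnectedComponent //
        eB G {b} (compSupp G (A ∪ B)ᶜ D) ≠ 0} := by
  have hU : (A ∪ B \ {b})ᶜ = insert b (A ∪ B)ᶜ := by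
    ext x
    rcases eq_or_ne x b with rfl | hx <;> simp [*]
  have hfar : ∀ D, ¬ eB G {b} (compSupp G (A ∪ B)ᶜ D) ≠ 0 →
      ∀ x ∈ compSupp G (A ∪ B)ᶜ D, ¬ G.Adj b x := by
    intro D hD x hx hbx
    rw [not_not, eB_singleton_left, Set.ncard_eq_zero] at hD
    exact hD.subset ⟨hbx, hx⟩
  have hodd : oddCompCount G (A ∪ B)ᶜ B ≤ oddCompCount G (A ∪ B \ {b})ᶜ (B \ {b}) +
      Nat.card {D : (G.induce (A ∪ B)ᶜ).ConnectedComponent //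
        eB G {b} (compSupp G (A ∪ B)ᶜ D) ≠ 0} := by
    refine oddCompCount_le_add _ (fun D _ x hx => ?_) (fun D hD x hx y hy hxy => ?_)
      (fun D hD => ?_)
    · rw [hU]
      exact Or.inr (compSupp_subset D hx)
    · rw [hU] at hy
      rcases hy with rfl | hy
      exacts [(hfar D hD x hx hxy.symm).elim, hy]
    · have hsplit := eB_union_right (G := G) (compSupp G (A ∪ B)ᶜ D)
        (Set.disjoint_sdiff_left (s := {b}) (t := B))
      rw [Set.sdiff_union_of_subset (Set.singleton_subset_iff.2 hbB), eB_comm _ {b},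
        not_not.1 hD, add_zero] at hsplit
      exact hsplit.symm
  have hE : eB G B Aᶜ = eB G (B \ {b}) Aᶜ + eB G {b} Aᶜ := by
    rw [← eB_union_left _ Set.disjoint_sdiff_left,
      Set.sdiff_union_of_subset (Set.singleton_subset_iff.2 hbB)]
  have hcard : (B \ {b}).ncard + 1 = B.ncard := Set.ncard_sdiff_singleton_add_one hbB
  rw [deltaAB_eq, deltaAB_eq, hE]
  omega

theorem IsBiasedBarrier.ncard_neighborSet_inter_le_one [Finite V] (hAB : IsBiasedBarrier G A B)
    {u : V} (hu : u ∈ (A ∪ B)ᶜ) : (G.neighborSet u ∩ B).ncard ≤ 1 := by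
  by_contra! hmany
  have huA : u ∉ A := fun h => hu (Or.inl h)
  have hdisj : Disjoint (insert u A) B :=
    Set.disjoint_insert_left.2 ⟨fun h => hu (Or.inr h), hAB.1.1⟩
  have hbar : IsBarrier G (insert u A) B :=
    hAB.1.of_deltaAB_le hdisj (by have := deltaAB_insert_add_le (G := G) hu; omega)
  have := (hAB.2 _ _ hbar).1
  rw [Set.ncard_insert_of_notMem huA] at this
  omega

theorem IsBiasedBarrier.ncard_neighborSet_inter_compSupp_le_one [Finite V]
    (hAB : IsBiasedBarrier G A B) (C : (G.induce (A ∪ B)ᶜ).ConnectedComponent) {b : V}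
    (hb : b ∈ B) : (G.neighborSet b ∩ compSupp G (A ∪ B)ᶜ C).ncard ≤ 1 := by
  classical
  cases nonempty_fintype V
  by_contra! hmany
  have hbA : b ∉ A := fun h => Set.disjoint_left.1 hAB.1.1 h hb
  have hadj : Nat.card {D : (G.induce (A ∪ B)ᶜ).ConnectedComponent //
      eB G {b} (compSupp G (A ∪ B)ᶜ D) ≠ 0} + 1 ≤ eB G {b} Aᶜ := calc
    _ = #{D | eB G {b} (compSupp G (A ∪ B)ᶜ D) ≠ 0} + 1 := by
      rw [Nat.card_eq_fintype_card, Fintype.card_subtype]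
    _ ≤ ∑ D, eB G {b} (compSupp G (A ∪ B)ᶜ D) :=
      Finset.card_filter_ne_zero_add_one_le_sum _ (Finset.mem_univ C)
        (by rw [eB_singleton_left]; omega)
    _ = eB G {b} (A ∪ B)ᶜ := (eB_eq_sum_compSupp _ _).symm
    _ ≤ eB G {b} Aᶜ := eB_mono_right _ (Set.compl_subset_compl.2 Set.subset_union_left)
  have hbar : IsBarrier G A (B \ {b}) :=
    hAB.1.of_deltaAB_le (hAB.1.1.mono_right Set.sdiff_subset)
      (by have := deltaAB_diff_singleton_add_le (G := G) hb hbA; omega)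
  have := (hAB.2 _ _ hbar).2 rfl
  have := Set.ncard_sdiff_singleton_lt_of_mem hb
  omega

end SimpleGraph

theorem stmt6_general {V : Type*} [Fintype V] (G : SimpleGraph V) (A B : Set V)
    (hAB : IsBiasedBarrier G A B)
    (C : (G.induce (A ∪ B)ᶜ).ConnectedComponent) :
    (∀ v ∈ B, (G.neighborSet v ∩ compSupp G (A ∪ B)ᶜ C).ncard ≤ 1) ∧
      (∀ v ∈ compSupp G (A ∪ B)ᶜ C, (G.neighborSet v ∩ B).ncard ≤ 1) :=
  ⟨fun _ hv => hAB.ncard_neighborSet_inter_compSupp_le_one C hv,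
    fun _ hv => hAB.ncard_neighborSet_inter_le_one (compSupp_subset C hv)⟩

theorem stmt6 {V : Type*} [Fintype V] (G : SimpleGraph V) (A B : Set V)
    (hG : ¬ HasTwoFactor G) (hAB : IsBiasedBarrier G A B)
    (C : (G.induce (A ∪ B)ᶜ).ConnectedComponent)
    (hodd : Odd (eB G (compSupp G (A ∪ B)ᶜ C) B)) :
    (∀ v ∈ B, (G.neighborSet v ∩ compSupp G (A ∪ B)ᶜ C).ncard ≤ 1) ∧
      (∀ v ∈ compSupp G (A ∪ B)ᶜ C, (G.neighborSet v ∩ B).ncard ≤ 1) :=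
  stmt6_general G A B hAB C
end

section
/- For a positive integer n, let H_n be the graph obtained from K_n ∨ (complement of K_{2n+1} ∪ K_{2n+1}) by adding a perfect matching between the 2n+1 vertices of the empty part and the 2n+1 vertices of the clique K_{2n+1}. Then the independence number of H_n is 2n+1 and the minimum degree of H_n is n+1. -/
open SimpleGraph

variable {V : Type*}

/-!
The `2n+1` vertices of the empty part are independent. Conversely, `H_n` is covered by `2n+1`
cliques, the matching edges with `K_n` added to one of them, and an independent set meets each
clique at most once. A vertex of the empty part has exactly `n+1` neighbours, `K_n` and its
partner; a vertex of the clique part also sees `K_n` and its partner, and a vertex of `K_n` sees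
the whole empty part.
-/

namespace SimpleGraph

variable {V α : Type*} {G : SimpleGraph V}

theorem isIndepSet_iff_forall_not_adj {s : Set V} :
    G.IsIndepSet s ↔ ∀ u ∈ s, ∀ v ∈ s, ¬ G.Adj u v :=
  ⟨fun hs _ hu _ hv huv => hs hu hv huv.ne huv, fun hs _ hu _ hv _ => hs _ hu _ hv⟩

theorem IsIndepSet.ncard_le_of_isClique_preimage [Finite α] {s : Set V} (hs : G.IsIndepSet s)
    (f : V → α) (hf : ∀ a, G.IsClique (f ⁻¹' {a})) : s.ncard ≤ Nat.card α := by
  have hinj : Set.InjOn f s := fun u hu v hv huv => by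
    by_contra hne
    exact hs hu hv hne (hf (f v) huv rfl hne)
  rw [← hinj.ncard_image]
  exact Set.ncard_le_card _

end SimpleGraph

theorem indepNum_eq_of_isIndepSet {V : Type*} {G : SimpleGraph V} {s : Set V} {k : ℕ}
    (hs : G.IsIndepSet s) (hcard : s.ncard = k) (hle : ∀ t, G.IsIndepSet t → t.ncard ≤ k) :
    _root_.indepNum G = k := by
  simp only [_root_.indepNum, ← SimpleGraph.isIndepSet_iff_forall_not_adj]
  have hbound : ∀ m ∈ {m | ∃ t, G.IsIndepSet t ∧ t.ncard = m}, m ≤ k := by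
    rintro _ ⟨t, ht, rfl⟩
    exact hle t ht
  exact le_antisymm (csSup_le ⟨k, s, hs, hcard⟩ hbound) (le_csSup ⟨k, hbound⟩ ⟨s, hs, hcard⟩)

theorem minDeg_eq_of_forall_le {V : Type*} {G : SimpleGraph V} {v : V} {k : ℕ}
    (hv : (G.neighborSet v).ncard = k) (hle : ∀ w, k ≤ (G.neighborSet w).ncard) :
    minDeg G = k :=
  le_antisymm (Nat.sInf_le ⟨v, hv⟩) (le_csInf ⟨k, v, hv⟩ (by rintro _ ⟨w, rfl⟩; exact hle w))

theorem Set.ncard_insert_range_inl {α β : Type*} [Finite α] (b : β) :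
    (insert (Sum.inr b) (Set.range (Sum.inl : α → α ⊕ β))).ncard = Nat.card α + 1 := by
  rw [Set.ncard_insert_of_notMem (by simp), Set.ncard_range_of_injective Sum.inl_injective]

namespace Hgraph

open Sum

variable {n : ℕ}

def column : Fin n ⊕ (Fin (2 * n + 1) ⊕ Fin (2 * n + 1)) → Fin (2 * n + 1) :=
  Sum.elim (fun _ => 0) (Sum.elim id id)

theorem isClique_column_preimage (i : Fin (2 * n + 1)) :
    (Hgraph n).IsClique (column ⁻¹' {i}) := by
  rintro (a | j | j) hu (b | k | k) hv hne <;>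
    simp_all [column, Hgraph]

theorem isIndepSet_range_inr_inl :
    (Hgraph n).IsIndepSet (Set.range (fun i : Fin (2 * n + 1) => inr (inl i))) := by
  rintro _ ⟨i, rfl⟩ _ ⟨j, rfl⟩ _
  simp [Hgraph]

theorem ncard_range_inr_inl :
    (Set.range (fun i : Fin (2 * n + 1) =>
      (inr (inl i) : Fin n ⊕ (Fin (2 * n + 1) ⊕ Fin (2 * n + 1))))).ncard = 2 * n + 1 := by
  rw [Set.ncard_range_of_injective (fun i j h => by simpa using h), Nat.card_fin]

theorem neighborSet_inr_inl (i : Fin (2 * n + 1)) :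
    (Hgraph n).neighborSet (inr (inl i)) = insert (inr (inr i)) (Set.range inl) := by
  ext (b | j | j) <;> simp [Hgraph, eq_comm]

theorem ncard_neighborSet_inr_inl (i : Fin (2 * n + 1)) :
    ((Hgraph n).neighborSet (inr (inl i))).ncard = n + 1 := by
  rw [neighborSet_inr_inl, Set.ncard_insert_range_inl, Nat.card_fin]

theorem le_ncard_neighborSet (v : Fin n ⊕ (Fin (2 * n + 1) ⊕ Fin (2 * n + 1))) :
    n + 1 ≤ ((Hgraph n).neighborSet v).ncard := by
  rcases v with a | i | i
  · calc n + 1 ≤ 2 * n + 1 := by omega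
      _ = _ := ncard_range_inr_inl.symm
      _ ≤ _ := Set.ncard_le_ncard (by rintro _ ⟨j, rfl⟩; simp [Hgraph])
  · exact (ncard_neighborSet_inr_inl i).ge
  · calc n + 1 = (insert (inr (inl i)) (Set.range inl)).ncard := by
          rw [Set.ncard_insert_range_inl, Nat.card_fin]
      _ ≤ _ := Set.ncard_le_ncard (by rintro _ (rfl | ⟨a, rfl⟩) <;> simp [Hgraph])

end Hgraph

theorem stmt18_general (n : ℕ) :
    _root_.indepNum (Hgraph n) = 2 * n + 1 ∧ minDeg (Hgraph n) = n + 1 := by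
  have hindep : ∀ t, (Hgraph n).IsIndepSet t → t.ncard ≤ 2 * n + 1 := fun t ht => by
    simpa using ht.ncard_le_of_isClique_preimage _ Hgraph.isClique_column_preimage
  exact ⟨indepNum_eq_of_isIndepSet Hgraph.isIndepSet_range_inr_inl Hgraph.ncard_range_inr_inl
      hindep,
    minDeg_eq_of_forall_le (Hgraph.ncard_neighborSet_inr_inl 0) Hgraph.le_ncard_neighborSet⟩

theorem stmt18 (n : ℕ) (hn : 1 ≤ n) :
    _root_.indepNum (Hgraph n) = 2 * n + 1 ∧ minDeg (Hgraph n) = n + 1 :=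
  stmt18_general n
end
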